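/- arXiv:0904.1428 — 2 statements merged into one kernel-verified Lean document; each statement's English description precedes it below -/
import Mathlib

section
/- Let dc : 𝔤 → V* be a linear map satisfying the infinitesimal cocycle identity dc([ξ,η]) = ξ·dc(η) − η·dc(ξ) for all ξ,η ∈ 𝔤. Then for all ξ ∈ 𝔤, v ∈ V, a ∈ V*, the following identity holds in 𝔤*: (ξv)⋄a + v⋄(ξa) + v⋄dc(ξ) − dc^T(ξv) = −ad*_ξ( v⋄a − dc^T(v) ). -/
/- Setup: 𝔤 a finite-dimensional real Lie algebra, V a finite-dimensional real
vector space with a representation ρ of 𝔤; duals, dual action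
⟨ξa, v⟩ = −⟨a, ξv⟩, diamond ⟨v⋄a, ξ⟩ = −⟨ξa, v⟩, coadjoint operator
⟨ad*_ξ μ, η⟩ = ⟨μ, [ξ,η]⟩, and transpose ⟨dc^T(v), ξ⟩ = ⟨dc(ξ), v⟩. -/

open LinearMap

variable {g V : Type*} [LieRing g] [LieAlgebra ℝ g] [AddCommGroup V] [Module ℝ V]

/-- The coadjoint operator `ad*_ξ μ = μ ∘ ad ξ`. -/
noncomputable def coad (ξ : g) (μ : Module.Dual ℝ g) : Module.Dual ℝ g :=
  μ.comp (LieAlgebra.ad ℝ g ξ)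

/-- The induced action of `𝔤` on the dual `V*`: `⟨ξa, v⟩ = −⟨a, ξv⟩`. -/
def dualAct (ρ : g →ₗ[ℝ] Module.End ℝ V) (ξ : g) (a : Module.Dual ℝ V) :
    Module.Dual ℝ V :=
  -(a.comp (ρ ξ))

/-- The diamond operation `⟨v⋄a, ξ⟩ = −⟨ξa, v⟩ = ⟨a, ξv⟩`. -/
def diamond (ρ : g →ₗ[ℝ] Module.End ℝ V) (v : V) (a : Module.Dual ℝ V) :
    Module.Dual ℝ g :=
  a.comp ((LinearMap.flip ρ) v)

/-- The transpose `dc^T : V → 𝔤*`, `⟨dc^T(v), ξ⟩ = ⟨dc(ξ), v⟩`. -/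
def dcT (dc : g →ₗ[ℝ] Module.Dual ℝ V) (v : V) : Module.Dual ℝ g :=
  (LinearMap.flip dc) v

/- The identity is the sum of two independent ones. Since ρ is a representation, ⋄ is
equivariant: (ξv)⋄a + v⋄(ξa) = −ad*_ξ(v⋄a). Pairing the cocycle identity with v gives
v⋄dc(ξ) − dc^T(ξv) = ad*_ξ(dc^T(v)). -/

theorem coad_sub (ξ : g) (μ ν : Module.Dual ℝ g) :
    coad ξ (μ - ν) = coad ξ μ - coad ξ ν :=
  sub_comp _ μ ν

theorem diamond_act_add_diamond_dualAct (ρ : g →ₗ[ℝ] Module.End ℝ V)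
    (hρ : ∀ ξ η : g, ρ ⁅ξ, η⁆ = ρ ξ * ρ η - ρ η * ρ ξ)
    (ξ : g) (v : V) (a : Module.Dual ℝ V) :
    diamond ρ (ρ ξ v) a + diamond ρ v (dualAct ρ ξ a) = -coad ξ (diamond ρ v a) := by
  ext η
  simp only [coad, diamond, dualAct, LinearMap.add_apply, LinearMap.neg_apply,
    LinearMap.sub_apply, comp_apply, flip_apply, LieAlgebra.ad_apply, hρ,
    Module.End.mul_apply, map_sub]
  ring

theorem diamond_dc_sub_dcT (ρ : g →ₗ[ℝ] Module.End ℝ V)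
    (dc : g →ₗ[ℝ] Module.Dual ℝ V)
    (hdc : ∀ ξ η : g, dc ⁅ξ, η⁆ = dualAct ρ ξ (dc η) - dualAct ρ η (dc ξ))
    (ξ : g) (v : V) :
    diamond ρ v (dc ξ) - dcT dc (ρ ξ v) = coad ξ (dcT dc v) := by
  ext η
  simp only [coad, diamond, dualAct, dcT, LinearMap.sub_apply, LinearMap.neg_apply,
    comp_apply, flip_apply, LieAlgebra.ad_apply, hdc]
  ring

theorem diamond_cocycle_identity_general
    (ρ : g →ₗ[ℝ] Module.End ℝ V)
    (hρ : ∀ ξ η : g, ρ ⁅ξ, η⁆ = ρ ξ * ρ η - ρ η * ρ ξ)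
    (dc : g →ₗ[ℝ] Module.Dual ℝ V)
    (hdc : ∀ ξ η : g, dc ⁅ξ, η⁆ = dualAct ρ ξ (dc η) - dualAct ρ η (dc ξ))
    (ξ : g) (v : V) (a : Module.Dual ℝ V) :
    diamond ρ (ρ ξ v) a + diamond ρ v (dualAct ρ ξ a) + diamond ρ v (dc ξ)
        - dcT dc (ρ ξ v)
      = -(coad ξ (diamond ρ v a - dcT dc v)) := by
  rw [add_sub_assoc, diamond_act_add_diamond_dualAct ρ hρ, diamond_dc_sub_dcT ρ dc hdc,
    coad_sub, neg_sub, neg_add_eq_sub]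

/-- If the linear map `dc : 𝔤 → V*` satisfies the
infinitesimal cocycle identity `dc([ξ,η]) = ξ·dc(η) − η·dc(ξ)`, then for all
`ξ ∈ 𝔤`, `v ∈ V`, `a ∈ V*`:
`(ξv)⋄a + v⋄(ξa) + v⋄dc(ξ) − dc^T(ξv) = −ad*_ξ( v⋄a − dc^T(v) )` in `𝔤*`. -/
theorem diamond_cocycle_identity
    [FiniteDimensional ℝ g] [FiniteDimensional ℝ V]
    (ρ : g →ₗ[ℝ] Module.End ℝ V)
    (hρ : ∀ ξ η : g, ρ ⁅ξ, η⁆ = ρ ξ * ρ η - ρ η * ρ ξ)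
    (dc : g →ₗ[ℝ] Module.Dual ℝ V)
    (hdc : ∀ ξ η : g, dc ⁅ξ, η⁆ = dualAct ρ ξ (dc η) - dualAct ρ η (dc ξ))
    (ξ : g) (v : V) (a : Module.Dual ℝ V) :
    diamond ρ (ρ ξ v) a + diamond ρ v (dualAct ρ ξ a) + diamond ρ v (dc ξ)
        - dcT dc (ρ ξ v)
      = -(coad ξ (diamond ρ v a - dcT dc v)) :=
  diamond_cocycle_identity_general ρ hρ dc hdc ξ v a
end

section
/- (Advection of the defect density.) Let U ⊆ ℝ^d be open, ν : ℝ × U → M_m(ℝ) smooth, and γ_1, …, γ_d : ℝ × U → M_m(ℝ) smooth maps satisfying ∂_t γ_i = ∂_i ν + [γ_i, ν] for every i = 1,…,d (where ∂_i is the partial derivative in the i-th spatial variable and [A,B] = AB − BA). Define the curvature B_{ij} := ∂_i γ_j − ∂_j γ_i + [γ_i, γ_j]. Then for all i, j, ∂_t B_{ij} = [B_{ij}, ν] on ℝ × U. -/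
/- Setup: M_m(ℝ) with commutator bracket [A,B] = AB − BA (and a matrix norm);
maps are defined on ℝ × ℝ^d (time × space), ∂_t is the derivative in the time
direction (1,0) and ∂_i the derivative in the i-th spatial direction
(0, e_i); γ_i are the components of a Lie-algebra-valued connection one-form,
ν a Lie-algebra-valued function, and B = dγ + [γ,γ] the curvature. -/

attribute [local instance] Matrix.linftyOpNormedRing Matrix.linftyOpNormedAlgebra

variable {d m : ℕ}

/-- Time derivative `∂_t f` of a map on `ℝ × ℝ^d`. -/
noncomputable def pt (f : ℝ × (Fin d → ℝ) → Matrix (Fin m) (Fin m) ℝ)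
    (p : ℝ × (Fin d → ℝ)) : Matrix (Fin m) (Fin m) ℝ :=
  fderiv ℝ f p (1, 0)

/-- Spatial derivative `∂_i f` of a map on `ℝ × ℝ^d`. -/
noncomputable def px (i : Fin d) (f : ℝ × (Fin d → ℝ) → Matrix (Fin m) (Fin m) ℝ)
    (p : ℝ × (Fin d → ℝ)) : Matrix (Fin m) (Fin m) ℝ :=
  fderiv ℝ f p (0, Pi.single i 1)

section Aux

variable {f g : ℝ × (Fin d → ℝ) → Matrix (Fin m) (Fin m) ℝ} {p v w : ℝ × (Fin d → ℝ)}

lemma dv_mul (hf : DifferentiableAt ℝ f p) (hg : DifferentiableAt ℝ g p) (v) :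
    fderiv ℝ (fun q => f q * g q) p v = fderiv ℝ f p v * g p + f p * fderiv ℝ g p v := by
  erw [fderiv_fun_mul' hf hg]
  exact add_comm _ _

lemma dv_add (hf : DifferentiableAt ℝ f p) (hg : DifferentiableAt ℝ g p) (v) :
    fderiv ℝ (fun q => f q + g q) p v = fderiv ℝ f p v + fderiv ℝ g p v := by
  erw [fderiv_fun_add hf hg]; rfl

lemma dv_sub (hf : DifferentiableAt ℝ f p) (hg : DifferentiableAt ℝ g p) (v) :
    fderiv ℝ (fun q => f q - g q) p v = fderiv ℝ f p v - fderiv ℝ g p v := by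
  erw [fderiv_fun_sub hf hg]; rfl

noncomputable instance instCLMNAG : NormedAddCommGroup (ℝ × (Fin d → ℝ) →L[ℝ] Matrix (Fin m) (Fin m) ℝ) :=
  ContinuousLinearMap.toNormedAddCommGroup

noncomputable instance instCLMNS : NormedSpace ℝ (ℝ × (Fin d → ℝ) →L[ℝ] Matrix (Fin m) (Fin m) ℝ) :=
  ContinuousLinearMap.toNormedSpace

lemma diff_dv (hf : ContDiffAt ℝ (⊤ : ℕ∞) f p) (v) :
    DifferentiableAt ℝ (fun q => fderiv ℝ f q v) p := by
  have h1 : ContDiffAt ℝ (⊤ : ℕ∞) (fderiv ℝ f) p := hf.fderiv_right (by simp)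
  exact (h1.clm_apply contDiffAt_const).differentiableAt (by simp)

lemma dv_swap (hf : ContDiffAt ℝ (⊤ : ℕ∞) f p) (v w : ℝ × (Fin d → ℝ)) :
    fderiv ℝ (fun q => fderiv ℝ f q v) p w = fderiv ℝ (fun q => fderiv ℝ f q w) p v := by
  have hd : DifferentiableAt ℝ (fderiv ℝ f) p :=
    (hf.fderiv_right (m := (⊤ : ℕ∞)) (by simp)).differentiableAt (by simp)
  have h1 : ∀ u : ℝ × (Fin d → ℝ),
      fderiv ℝ (fun q => fderiv ℝ f q u) p = (fderiv ℝ (fderiv ℝ f) p).flip u := by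
    intro u
    erw [fderiv_clm_apply hd (differentiableAt_const u)]
    erw [fderiv_const_apply, ContinuousLinearMap.comp_zero, zero_add]
    rfl
  rw [h1 v, h1 w]
  exact hf.isSymmSndFDerivAt (by rw [minSmoothness_of_isRCLikeNormedField]; exact WithTop.coe_le_coe.mpr (le_top : (2 : ℕ∞) ≤ ⊤)) w v

end Aux

section Aux2

variable {f g ν : ℝ × (Fin d → ℝ) → Matrix (Fin m) (Fin m) ℝ}
  {S : Set (ℝ × (Fin d → ℝ))} {p : ℝ × (Fin d → ℝ)}

lemma advected_deriv (hSo : IsOpen S) (hp : p ∈ S)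
    (hν : ContDiffOn ℝ (⊤ : ℕ∞) ν S) (hg : ContDiffOn ℝ (⊤ : ℕ∞) g S) (u : ℝ × (Fin d → ℝ))
    (hadv : ∀ q ∈ S, fderiv ℝ g q (1, 0) = fderiv ℝ ν q u + (g q * ν q - ν q * g q))
    (v : ℝ × (Fin d → ℝ)) :
    fderiv ℝ (fun q => fderiv ℝ g q v) p (1, 0)
      = fderiv ℝ (fun q => fderiv ℝ ν q u) p v
        + (fderiv ℝ g p v * ν p + g p * fderiv ℝ ν p v
           - (fderiv ℝ ν p v * g p + ν p * fderiv ℝ g p v)) := by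
  have hga : ContDiffAt ℝ (⊤ : ℕ∞) g p := hg.contDiffAt (hSo.mem_nhds hp)
  have hνa : ContDiffAt ℝ (⊤ : ℕ∞) ν p := hν.contDiffAt (hSo.mem_nhds hp)
  have hgd : DifferentiableAt ℝ g p := hga.differentiableAt (by simp)
  have hνd : DifferentiableAt ℝ ν p := hνa.differentiableAt (by simp)
  rw [dv_swap hga v (1, 0)]
  have heq : (fun q => fderiv ℝ g q (1, 0))
      =ᶠ[nhds p] fun q => fderiv ℝ ν q u + (g q * ν q - ν q * g q) := by
    filter_upwards [hSo.mem_nhds hp] with q hq using hadv q hq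
  rw [heq.fderiv_eq]
  have h1 : DifferentiableAt ℝ (fun q => fderiv ℝ ν q u) p := diff_dv hνa u
  have h2 : DifferentiableAt ℝ (fun q => g q * ν q) p := hgd.mul hνd
  have h3 : DifferentiableAt ℝ (fun q => ν q * g q) p := hνd.mul hgd
  rw [dv_add h1 (h2.fun_sub h3), dv_sub h2 h3, dv_mul hgd hνd, dv_mul hνd hgd]

end Aux2


/-- **Advection of the defect density.** If the γ_i satisfy the
advection equations `∂_t γ_i = ∂_i ν + [γ_i, ν]` on ℝ × U, then the curvature
`B_{ij} := ∂_i γ_j − ∂_j γ_i + [γ_i, γ_j]` satisfies `∂_t B_{ij} = [B_{ij}, ν]`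
on ℝ × U. -/
theorem defect_density_advection
    (U : Set (Fin d → ℝ)) (hU : IsOpen U)
    (ν : ℝ × (Fin d → ℝ) → Matrix (Fin m) (Fin m) ℝ)
    (γ : Fin d → ℝ × (Fin d → ℝ) → Matrix (Fin m) (Fin m) ℝ)
    (hν : ContDiffOn ℝ (⊤ : ℕ∞) ν (Set.univ ×ˢ U))
    (hγ : ∀ i, ContDiffOn ℝ (⊤ : ℕ∞) (γ i) (Set.univ ×ˢ U))
    (hadv : ∀ i, ∀ p ∈ Set.univ ×ˢ U,
      pt (γ i) p = px i ν p + (γ i p * ν p - ν p * γ i p))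
    (B : Fin d → Fin d → ℝ × (Fin d → ℝ) → Matrix (Fin m) (Fin m) ℝ)
    (hB : ∀ i j p, B i j p = px i (γ j) p - px j (γ i) p
      + (γ i p * γ j p - γ j p * γ i p)) :
    ∀ i j, ∀ p ∈ Set.univ ×ˢ U,
      pt (B i j) p = B i j p * ν p - ν p * B i j p := by
  intro i j p hp
  have hSo : IsOpen (Set.univ ×ˢ U : Set (ℝ × (Fin d → ℝ))) := isOpen_univ.prod hU
  set ei : ℝ × (Fin d → ℝ) := (0, Pi.single i 1) with hei
  set ej : ℝ × (Fin d → ℝ) := (0, Pi.single j 1) with hej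
  have hγaj : ContDiffAt ℝ (⊤ : ℕ∞) (γ j) p := (hγ j).contDiffAt (hSo.mem_nhds hp)
  have hγai : ContDiffAt ℝ (⊤ : ℕ∞) (γ i) p := (hγ i).contDiffAt (hSo.mem_nhds hp)
  have hνa : ContDiffAt ℝ (⊤ : ℕ∞) ν p := hν.contDiffAt (hSo.mem_nhds hp)
  have hdi : DifferentiableAt ℝ (γ i) p := hγai.differentiableAt (by simp)
  have hdj : DifferentiableAt ℝ (γ j) p := hγaj.differentiableAt (by simp)
  have hBfun : B i j = fun q => fderiv ℝ (γ j) q ei - fderiv ℝ (γ i) q ej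
      + (γ i q * γ j q - γ j q * γ i q) := funext (hB i j)
  have d1 : DifferentiableAt ℝ (fun q => fderiv ℝ (γ j) q ei) p := diff_dv hγaj ei
  have d2 : DifferentiableAt ℝ (fun q => fderiv ℝ (γ i) q ej) p := diff_dv hγai ej
  have d3 : DifferentiableAt ℝ (fun q => γ i q * γ j q) p := hdi.mul hdj
  have d4 : DifferentiableAt ℝ (fun q => γ j q * γ i q) p := hdj.mul hdi
  have key1 := advected_deriv hSo hp hν (hγ j) ej (fun q hq => hadv j q hq) ei
  have key2 := advected_deriv hSo hp hν (hγ i) ei (fun q hq => hadv i q hq) ej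
  have hswap : fderiv ℝ (fun q => fderiv ℝ ν q ej) p ei
      = fderiv ℝ (fun q => fderiv ℝ ν q ei) p ej := dv_swap hνa ej ei
  have hti := hadv i p hp
  have htj := hadv j p hp
  simp only [pt, px] at hti htj ⊢
  rw [hBfun]
  rw [dv_add ((d1.fun_sub d2)) (d3.fun_sub d4) (1, 0), dv_sub d1 d2 (1, 0), dv_sub d3 d4 (1, 0),
    dv_mul hdi hdj (1, 0), dv_mul hdj hdi (1, 0), key1, key2, hswap, hti, htj]
  noncomm_ring
end
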